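/- arXiv:2408.06914 — 8 statements merged into one kernel-verified Lean document; each statement's English description precedes it below -/
import Mathlib

section
/- Let F and A be disjoint finite sets and let Q = (Q_a)_{a∈A} be a family of subsets of F such that the collection {Q_a : a ∈ A} is totally ordered by inclusion. Define a binary relation ≺ on F ∪ A by: for a ≠ a' in A, a ≺ a' iff Q_a ⊊ Q_{a'}; for a ∈ A and f ∈ F, a ≺ f iff f ∉ Q_a, and f ≺ a iff f ∈ Q_a; for f ≠ f' in F, f ≺ f' iff there exists a ∈ A with f ∈ Q_a and f' ∉ Q_a. Then ≺ is a strict partial order on F ∪ A (irreflexive, asymmetric, and transitive). -/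
/-- The precedence relation `≺` on the disjoint union `F ∪ A` (modeled as `F ⊕ A`):
* for `a, a' ∈ A`: `a ≺ a'` iff `Q_a ⊊ Q_{a'}`;
* for `a ∈ A`, `f ∈ F`: `a ≺ f` iff `f ∉ Q_a`, and `f ≺ a` iff `f ∈ Q_a`;
* for `f, f' ∈ F`: `f ≺ f'` iff `∃ a ∈ A, f ∈ Q_a ∧ f' ∉ Q_a`. -/
def prec {F A : Type} (Q : A → Set F) : F ⊕ A → F ⊕ A → Prop
  | .inr a, .inr a' => Q a ⊂ Q a'
  | .inr a, .inl f => f ∉ Q a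
  | .inl f, .inr a => f ∈ Q a
  | .inl f, .inl f' => ∃ a, f ∈ Q a ∧ f' ∉ Q a

/-- If the family `{Q_a : a ∈ A}` is totally ordered by inclusion, then `≺` is a strict
partial order on `F ∪ A`: irreflexive, asymmetric, and transitive. -/
theorem prec_isStrictPartialOrder {F A : Type} [Fintype F] [Fintype A]
    (Q : A → Set F) (hQ : ∀ a a' : A, Q a ⊆ Q a' ∨ Q a' ⊆ Q a) :
    (∀ x, ¬ prec Q x x) ∧
      (∀ x y, prec Q x y → ¬ prec Q y x) ∧
      (∀ x y z, prec Q x y → prec Q y z → prec Q x z) := by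
  have hirr : ∀ x, ¬ prec Q x x := by
    rintro (f | a) h
    · obtain ⟨a, h1, h2⟩ := h; exact h2 h1
    · exact h.2 h.1
  have htrans : ∀ x y z, prec Q x y → prec Q y z → prec Q x z := by
    rintro (f | a) (f' | a') (f'' | a'') hxy hyz
    · obtain ⟨b, hb1, hb2⟩ := hxy
      obtain ⟨c, hc1, hc2⟩ := hyz
      rcases hQ b c with h | h
      · exact ⟨c, h hb1, hc2⟩
      · exact absurd (h hc1) hb2
    · obtain ⟨b, hb1, hb2⟩ := hxy
      rcases hQ a'' b with h | h
      · exact absurd (h hyz) hb2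
      · exact h hb1
    · exact ⟨a', hxy, hyz⟩
    · exact hyz.1 hxy
    · obtain ⟨c, hc1, hc2⟩ := hyz
      rcases hQ a c with h | h
      · exact fun hf => hc2 (h hf)
      · exact absurd (h hc1) hxy
    · refine ⟨?_, fun hsub => hxy (hsub hyz)⟩
      rcases hQ a a'' with h | h
      · exact h
      · exact absurd (h hyz) hxy
    · exact fun hf => hyz (hxy.1 hf)
    · exact hxy.trans hyz
  exact ⟨hirr, fun x y h h' => hirr x (htrans x y x h h'), htrans⟩
end

section
/- Let I₁, I₂ be finite subsets of D = [0,1] × [0,∞] and let p ∈ [0,1]. Define ψ((p₁,c₁),(p₂,c₂),p) = ((1−p)·p₁ + p·p₂, max(c₁,c₂)) and Ψ_F(I₁,I₂,p) = {ψ(d₁,d₂,p) : d₁ ∈ I₁, d₂ ∈ I₂}. Then PF(Ψ_F(PF(I₁), I₂, p)) = PF(Ψ_F(I₁, I₂, p)) = PF(Ψ_F(I₁, PF(I₂), p)). -/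
open scoped ENNReal

/-- `D = [0,1] × [0,∞]`: probability–cost pairs, costs in the extended nonnegative
reals.  We encode it as the pairs `(p, c) : ℝ≥0∞ × ℝ≥0∞` with `p ≤ 1`. -/
def Dom : Set (ℝ≥0∞ × ℝ≥0∞) := {d | d.1 ≤ 1}

/-- `(p,c) ⊑ (p',c')` iff `p ≥ p'` and `c ≤ c'`. -/
def sqle (d d' : ℝ≥0∞ × ℝ≥0∞) : Prop := d'.1 ≤ d.1 ∧ d.2 ≤ d'.2

/-- `d ⊏ d'` iff `d ⊑ d'` and `d ≠ d'`. -/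
def slt (d d' : ℝ≥0∞ × ℝ≥0∞) : Prop := sqle d d' ∧ d ≠ d'

/-- The Pareto front `PF(I) = {d ∈ I : ∀ d' ∈ I, ¬(d' ⊏ d)}`. -/
def PF (I : Set (ℝ≥0∞ × ℝ≥0∞)) : Set (ℝ≥0∞ × ℝ≥0∞) :=
  {d ∈ I | ∀ d' ∈ I, ¬ slt d' d}

/-- `ψ((p₁,c₁),(p₂,c₂),p) = ((1−p)·p₁ + p·p₂, max(c₁,c₂))`. -/
noncomputable def psi (d₁ d₂ : ℝ≥0∞ × ℝ≥0∞) (p : ℝ≥0∞) : ℝ≥0∞ × ℝ≥0∞ :=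
  ((1 - p) * d₁.1 + p * d₂.1, max d₁.2 d₂.2)

/-- `Ψ_F(I₁,I₂,p) = {ψ(d₁,d₂,p) : d₁ ∈ I₁, d₂ ∈ I₂}`. -/
noncomputable def PsiF (I₁ I₂ : Set (ℝ≥0∞ × ℝ≥0∞)) (p : ℝ≥0∞) : Set (ℝ≥0∞ × ℝ≥0∞) :=
  {d | ∃ d₁ ∈ I₁, ∃ d₂ ∈ I₂, d = psi d₁ d₂ p}

/-!
A subset `J ⊆ I` that dominates `I` (every `x ∈ I` has some `y ∈ J` with `y ⊑ x`) has the same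
Pareto front as `I`. In a finite set the Pareto front dominates the set, as `⊏` is well founded
there; and since `ψ` is monotone in both arguments for `⊑`, `Ψ_F(PF(I₁), I₂, p)` dominates
`Ψ_F(I₁, I₂, p)`, and likewise on the right.
-/

lemma sqle_refl (d : ℝ≥0∞ × ℝ≥0∞) : sqle d d := ⟨le_rfl, le_rfl⟩

lemma sqle_trans {a b c : ℝ≥0∞ × ℝ≥0∞} (hab : sqle a b) (hbc : sqle b c) : sqle a c :=
  ⟨hbc.1.trans hab.1, hab.2.trans hbc.2⟩

lemma sqle_antisymm {a b : ℝ≥0∞ × ℝ≥0∞} (hab : sqle a b) (hba : sqle b a) : a = b :=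
  Prod.ext (hba.1.antisymm hab.1) (hab.2.antisymm hba.2)

instance : IsStrictOrder (ℝ≥0∞ × ℝ≥0∞) slt where
  irrefl _ h := h.2 rfl
  trans _ _ _ hab hbc := ⟨sqle_trans hab.1 hbc.1, fun h => hab.2 (sqle_antisymm hab.1 (h ▸ hbc.1))⟩

lemma PF_subset (I : Set (ℝ≥0∞ × ℝ≥0∞)) : PF I ⊆ I := fun _ hd => hd.1

lemma exists_mem_PF_sqle {I : Set (ℝ≥0∞ × ℝ≥0∞)} (hI : I.Finite) {x : ℝ≥0∞ × ℝ≥0∞}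
    (hx : x ∈ I) : ∃ y ∈ PF I, sqle y x := by
  refine (hI.wellFoundedOn (r := slt)).induction hx (P := fun x => ∃ y ∈ PF I, sqle y x)
    fun y hy ih => ?_
  by_cases hyPF : y ∈ PF I
  · exact ⟨y, hyPF, sqle_refl y⟩
  · obtain ⟨z, hz, hzy⟩ : ∃ z ∈ I, slt z y := by simpa [PF, hy] using hyPF
    obtain ⟨w, hw, hwz⟩ := ih z hz hzy
    exact ⟨w, hw, sqle_trans hwz hzy.1⟩

lemma PF_eq_of_subset_of_forall_exists_sqle {I J : Set (ℝ≥0∞ × ℝ≥0∞)} (hJI : J ⊆ I)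
    (hdom : ∀ x ∈ I, ∃ y ∈ J, sqle y x) : PF I = PF J := by
  ext d
  constructor
  · rintro ⟨hdI, hmin⟩
    obtain ⟨y, hyJ, hyd⟩ := hdom d hdI
    obtain rfl : y = d := by
      by_contra hne
      exact hmin y (hJI hyJ) ⟨hyd, hne⟩
    exact ⟨hyJ, fun d' hd' => hmin d' (hJI hd')⟩
  · rintro ⟨hdJ, hmin⟩
    refine ⟨hJI hdJ, fun d' hd' hd'd => ?_⟩
    obtain ⟨y, hyJ, hyd'⟩ := hdom d' hd'
    by_cases hyd : y = d
    · subst hyd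
      exact hd'd.2 (sqle_antisymm hd'd.1 hyd')
    · exact hmin y hyJ ⟨sqle_trans hyd' hd'd.1, hyd⟩

lemma psi_sqle_psi {a₁ a₂ b₁ b₂ : ℝ≥0∞ × ℝ≥0∞} (h₁ : sqle a₁ b₁) (h₂ : sqle a₂ b₂)
    (p : ℝ≥0∞) : sqle (psi a₁ a₂ p) (psi b₁ b₂ p) :=
  ⟨add_le_add (mul_le_mul_right h₁.1 _) (mul_le_mul_right h₂.1 _), max_le_max h₁.2 h₂.2⟩

lemma PsiF_mono {I₁ I₂ J₁ J₂ : Set (ℝ≥0∞ × ℝ≥0∞)} (h₁ : J₁ ⊆ I₁) (h₂ : J₂ ⊆ I₂) (p : ℝ≥0∞) :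
    PsiF J₁ J₂ p ⊆ PsiF I₁ I₂ p := by
  rintro _ ⟨d₁, hd₁, d₂, hd₂, rfl⟩
  exact ⟨d₁, h₁ hd₁, d₂, h₂ hd₂, rfl⟩

lemma PF_PsiF_eq_of_subset_of_forall_exists_sqle {I₁ I₂ J₁ J₂ : Set (ℝ≥0∞ × ℝ≥0∞)}
    (hJI₁ : J₁ ⊆ I₁) (hJI₂ : J₂ ⊆ I₂)
    (hdom₁ : ∀ x ∈ I₁, ∃ y ∈ J₁, sqle y x) (hdom₂ : ∀ x ∈ I₂, ∃ y ∈ J₂, sqle y x)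
    (p : ℝ≥0∞) : PF (PsiF I₁ I₂ p) = PF (PsiF J₁ J₂ p) := by
  refine PF_eq_of_subset_of_forall_exists_sqle (PsiF_mono hJI₁ hJI₂ p) ?_
  rintro _ ⟨d₁, hd₁, d₂, hd₂, rfl⟩
  obtain ⟨y₁, hy₁, hyd₁⟩ := hdom₁ d₁ hd₁
  obtain ⟨y₂, hy₂, hyd₂⟩ := hdom₂ d₂ hd₂
  exact ⟨psi y₁ y₂ p, ⟨y₁, hy₁, y₂, hy₂, rfl⟩, psi_sqle_psi hyd₁ hyd₂ p⟩

theorem pf_psiF_pf_general (I₁ I₂ : Set (ℝ≥0∞ × ℝ≥0∞)) (hI₁ : I₁.Finite) (hI₂ : I₂.Finite)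
    (p : ℝ≥0∞) :
    PF (PsiF (PF I₁) I₂ p) = PF (PsiF I₁ I₂ p) ∧
      PF (PsiF I₁ I₂ p) = PF (PsiF I₁ (PF I₂) p) := by
  have hrefl (I : Set (ℝ≥0∞ × ℝ≥0∞)) : ∀ x ∈ I, ∃ y ∈ I, sqle y x :=
    fun x hx => ⟨x, hx, sqle_refl x⟩
  exact ⟨(PF_PsiF_eq_of_subset_of_forall_exists_sqle (PF_subset I₁) subset_rfl
      (fun _ => exists_mem_PF_sqle hI₁) (hrefl I₂) p).symm,
    PF_PsiF_eq_of_subset_of_forall_exists_sqle subset_rfl (PF_subset I₂)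
      (hrefl I₁) (fun _ => exists_mem_PF_sqle hI₂) p⟩

/-- `PF(Ψ_F(PF(I₁), I₂, p)) = PF(Ψ_F(I₁, I₂, p)) = PF(Ψ_F(I₁, PF(I₂), p))`. -/
theorem pf_psiF_pf (I₁ I₂ : Set (ℝ≥0∞ × ℝ≥0∞)) (hI₁ : I₁.Finite) (hI₂ : I₂.Finite)
    (hI₁D : I₁ ⊆ Dom) (hI₂D : I₂ ⊆ Dom) (p : ℝ≥0∞) (hp : p ≤ 1) :
    PF (PsiF (PF I₁) I₂ p) = PF (PsiF I₁ I₂ p) ∧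
      PF (PsiF I₁ I₂ p) = PF (PsiF I₁ (PF I₂) p) :=
  pf_psiF_pf_general I₁ I₂ hI₁ hI₂ p
end

section
/- Let Λ = (F, A, φ, Q) be a scenario and suppose f ∈ F is minimal with respect to ≺_Q, i.e. f ∈ Q_a for every a ∈ A. Let Λ^{f/0} and Λ^{f/1} be the reduced scenarios obtained by substituting 0 (resp. 1) for the f-variable of φ, removing f from F, and setting Q'_a = Q_a∖{f}. Then the map ⋆ : Σ_{Λ^{f/0}} × Σ_{Λ^{f/1}} → Σ_Λ defined by (σ⁰ ⋆ σ¹)_a(x) = (¬x_f ∧ σ⁰_a(x')) ∨ (x_f ∧ σ¹_a(x')) for x ∈ 𝔹^{Q_a}, where x' = x restricted to Q_a∖{f}, is a bijection. -/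
open scoped ENNReal

/-- A scenario `(F, A, φ, Q)`: `φ : 𝔹^F × 𝔹^A → 𝔹` is a Boolean function, and
`Q` assigns to each attack `a ∈ A` the subset `Q_a ⊆ F` of failures observable when
deciding about `a`; the family `{Q_a}` is totally ordered by inclusion. -/
structure Scenario (F A : Type) where
  φ : (F → Bool) → (A → Bool) → Bool
  Q : A → Finset F
  chain : ∀ a a' : A, Q a ⊆ Q a' ∨ Q a' ⊆ Q a

variable {F A : Type}

/-- A strategy: for each `a ∈ A`, a map `σ_a : 𝔹^{Q_a} → 𝔹`. -/
def Strategy (Λ : Scenario F A) : Type :=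
  (a : A) → ({f : F // f ∈ Λ.Q a} → Bool) → Bool

/-- The induced map `σ̂ : 𝔹^F → 𝔹^A`, `σ̂(x)_a = σ_a(x|_{Q_a})`. -/
def hatS (Λ : Scenario F A) (σ : Strategy Λ) (x : F → Bool) : A → Bool :=
  fun a => σ a fun f => x f.1

/-- The reduced scenario `Λ^{f/b}`: substitute `b` for the `f`-variable of `φ`,
remove `f` from `F`, and set `Q'_a = Q_a \ {f}`. -/
def Scenario.reduceF [DecidableEq F] (Λ : Scenario F A) (f : F) (b : Bool) :
    Scenario {g : F // g ≠ f} A where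
  φ := fun x y => Λ.φ (fun g => if h : g = f then b else x ⟨g, h⟩) y
  Q := fun a => (Λ.Q a).subtype (· ≠ f)
  chain := fun a a' => (Λ.chain a a').imp
    (fun h x hx => Finset.mem_subtype.mpr (h (Finset.mem_subtype.mp hx)))
    (fun h x hx => Finset.mem_subtype.mpr (h (Finset.mem_subtype.mp hx)))

/-- Restriction of `x ∈ 𝔹^{Q_a}` to `𝔹^{Q_a \ {f}}` (the `x'` of the paper). -/
def restr [DecidableEq F] (Λ : Scenario F A) (f : F) (b : Bool) (a : A)
    (x : {f' : F // f' ∈ Λ.Q a} → Bool) :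
    ({g // g ∈ (Λ.reduceF f b).Q a} → Bool) :=
  fun g => x ⟨g.1.1, Finset.mem_subtype.mp g.2⟩

/-- The composed strategy `σ⁰ ⋆ σ¹`, defined by
`(σ⁰ ⋆ σ¹)_a(x) = (¬x_f ∧ σ⁰_a(x')) ∨ (x_f ∧ σ¹_a(x'))`. -/
def star [DecidableEq F] (Λ : Scenario F A) (f : F) (hf : ∀ a, f ∈ Λ.Q a)
    (σ0 : Strategy (Λ.reduceF f false)) (σ1 : Strategy (Λ.reduceF f true)) :
    Strategy Λ := fun a x =>
  (!(x ⟨f, hf a⟩) && σ0 a (restr Λ f false a x)) ||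
    ((x ⟨f, hf a⟩) && σ1 a (restr Λ f true a x))

/-- Extend `x' ∈ 𝔹^{Q_a \ {f}}` to `𝔹^{Q_a}` by assigning `b` to `f`. -/
def extend [DecidableEq F] (Λ : Scenario F A) (f : F) (b : Bool) (a : A)
    (x : {g // g ∈ (Λ.reduceF f b).Q a} → Bool) (hfa : f ∈ Λ.Q a) :
    ({f' : F // f' ∈ Λ.Q a} → Bool) :=
  fun g => if h : g.1 = f then b else
    x ⟨⟨g.1, h⟩, Finset.mem_subtype.mpr g.2⟩

lemma restr_extend [DecidableEq F] (Λ : Scenario F A) (f : F) (b : Bool) (a : A)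
    (x : {g // g ∈ (Λ.reduceF f b).Q a} → Bool) (hfa : f ∈ Λ.Q a) :
    restr Λ f b a (extend Λ f b a x hfa) = x := by
  funext g
  simp [restr, extend, g.1.2]

lemma extend_restr [DecidableEq F] (Λ : Scenario F A) (f : F) (a : A)
    (x : {f' : F // f' ∈ Λ.Q a} → Bool) (hfa : f ∈ Λ.Q a) (b : Bool)
    (hb : x ⟨f, hfa⟩ = b) :
    extend Λ f b a (restr Λ f b a x) hfa = x := by
  funext g
  rcases g with ⟨g, hg⟩
  by_cases h : g = f
  · subst h; simp [extend, ← hb]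
  · simp [extend, restr, h]

/-- If `f ∈ F` is minimal w.r.t. `≺_Q` (i.e. `f ∈ Q_a` for every `a ∈ A`), then
`⋆ : Σ_{Λ^{f/0}} × Σ_{Λ^{f/1}} → Σ_Λ` is a bijection. -/
theorem star_bijective [DecidableEq F] (Λ : Scenario F A) (f : F)
    (hf : ∀ a, f ∈ Λ.Q a) :
    Function.Bijective
      (fun σ : Strategy (Λ.reduceF f false) × Strategy (Λ.reduceF f true) =>
        star Λ f hf σ.1 σ.2) := by
  rw [Function.bijective_iff_has_inverse]
  refine ⟨fun σ => ⟨fun a x => σ a (extend Λ f false a x (hf a)),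
    fun a x => σ a (extend Λ f true a x (hf a))⟩, ?_, ?_⟩
  · rintro ⟨σ0, σ1⟩
    refine Prod.ext ?_ ?_ <;> funext a x <;>
      simp [_root_.star, extend, restr_extend]
  · intro σ
    funext a x
    rcases hb : x ⟨f, hf a⟩ with _ | _ <;>
      simp [_root_.star, hb, extend_restr Λ f a x (hf a) _ hb]
end

section
/- Let (Λ, π, γ) be a quantified scenario with f ∈ F minimal with respect to ≺_Q (i.e. f ∈ Q_a for all a ∈ A), and let Λ^{f/0}, Λ^{f/1} be the reduced scenarios obtained by substituting 0 (resp. 1) for the f-variable of φ and removing f. Then for all σ⁰ ∈ Σ_{Λ^{f/0}} and σ¹ ∈ Σ_{Λ^{f/1}}, the composed strategy σ⁰ ⋆ σ¹ satisfies γ̂_m(σ⁰ ⋆ σ¹) = max(γ̂_m^{f/0}(σ⁰), γ̂_m^{f/1}(σ¹)). -/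
open scoped ENNReal

variable {F A : Type}

/-- Bernoulli weight of an outcome `x ∈ 𝔹^F`:
`(∏_{f : x_f = 1} π_f) · (∏_{f : x_f = 0} (1 - π_f))`. -/
noncomputable def wght [Fintype F] (π : F → ℝ≥0∞) (x : F → Bool) : ℝ≥0∞ :=
  ∏ f, if x f then π f else 1 - π f

/-- Success probability `π̂(σ)`: the probability that `φ(x, σ̂(x)) = 1` when the
coordinates `x_f` are independent Bernoulli(`π_f`). -/
noncomputable def probS [Fintype F] [DecidableEq F] (Λ : Scenario F A)
    (π : F → ℝ≥0∞) (σ : Strategy Λ) : ℝ≥0∞ :=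
  ∑ x : F → Bool, wght π x * (if Λ.φ x (hatS Λ σ x) then 1 else 0)

/-- Cost incurred by strategy `σ` upon observing `x`: `Σ_{a : σ̂(x)_a = 1} γ_a`. -/
noncomputable def costOf [Fintype A] (Λ : Scenario F A) (γ : A → ℝ≥0∞) (σ : Strategy Λ)
    (x : F → Bool) : ℝ≥0∞ :=
  ∑ a, if hatS Λ σ x a then γ a else 0

/-- Maximal cost `γ̂_m(σ) = max_{x ∈ 𝔹^F} Σ_{a : σ̂(x)_a = 1} γ_a`. -/
noncomputable def maxCost [Fintype F] [DecidableEq F] [Fintype A] (Λ : Scenario F A)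
    (γ : A → ℝ≥0∞) (σ : Strategy Λ) : ℝ≥0∞ :=
  ⨆ x : F → Bool, costOf Λ γ σ x

/-- Expected cost `γ̂_e(σ)`. -/
noncomputable def expCost [Fintype F] [DecidableEq F] [Fintype A] (Λ : Scenario F A)
    (π : F → ℝ≥0∞) (γ : A → ℝ≥0∞) (σ : Strategy Λ) : ℝ≥0∞ :=
  ∑ x : F → Bool, wght π x * costOf Λ γ σ x

/-- `γ̂_m(σ⁰ ⋆ σ¹) = max(γ̂_m^{f/0}(σ⁰), γ̂_m^{f/1}(σ¹))`. -/
theorem maxCost_star [Fintype F] [Fintype A] [DecidableEq F]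
    (Λ : Scenario F A) (π : F → ℝ≥0∞) (hπ : ∀ g, π g ≤ 1) (γ : A → ℝ≥0∞)
    (f : F) (hf : ∀ a, f ∈ Λ.Q a)
    (σ0 : Strategy (Λ.reduceF f false)) (σ1 : Strategy (Λ.reduceF f true)) :
    maxCost Λ γ (star Λ f hf σ0 σ1) =
      max (maxCost (Λ.reduceF f false) γ σ0) (maxCost (Λ.reduceF f true) γ σ1) := by
  have key : ∀ (b : Bool) (x' : {g : F // g ≠ f} → Bool),
      costOf Λ γ (star Λ f hf σ0 σ1)
        (fun g => if h : g = f then b else x' ⟨g, h⟩) =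
      costOf (Λ.reduceF f b) γ (bif b then σ1 else σ0) x' := by
    intro b x'
    unfold costOf
    refine Finset.sum_congr rfl fun a _ => ?_
    have h2 : ∀ (c : Bool),
        restr Λ f c a (fun (g : {f' : F // f' ∈ Λ.Q a}) =>
          if h : g.1 = f then b else x' ⟨g.1, h⟩) = fun g => x' g.1 := by
      intro c; funext g
      simp only [restr, dif_neg g.1.2]
    congr 1
    have : hatS Λ (star Λ f hf σ0 σ1) (fun g => if h : g = f then b else x' ⟨g, h⟩) a
        = (bif b then σ1 else σ0) a (fun g => x' g.1) := by
      have hst : ∀ (x : {f' : F // f' ∈ Λ.Q a} → Bool),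
          star Λ f hf σ0 σ1 a x =
            ((!(x ⟨f, hf a⟩) && σ0 a (restr Λ f false a x)) ||
              ((x ⟨f, hf a⟩) && σ1 a (restr Λ f true a x))) := fun _ => rfl
      simp only [hatS, hst, h2]
      cases b <;> (simp; try rfl)
    rw [this]
    cases b <;> rfl
  apply le_antisymm
  · refine iSup_le fun x => ?_
    set y : {g : F // g ≠ f} → Bool := fun g => x g.1 with hy
    have hx : x = fun g => if h : g = f then x f else y ⟨g, h⟩ := by
      funext g; by_cases h : g = f <;> simp [h, hy]
    rw [hx, key (x f) y]
    cases x f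
    · exact le_max_of_le_left (le_iSup _ _)
    · exact le_max_of_le_right (le_iSup _ _)
  · refine max_le (iSup_le fun x' => ?_) (iSup_le fun x' => ?_)
    · exact (key false x').symm.le.trans (le_iSup _ _)
    · exact (key true x').symm.le.trans (le_iSup _ _)
end

section
/- Let (Λ, π, γ) be a quantified scenario such that some f ∈ F is minimal in F ∪ A with respect to ≺_Q (i.e. f ∈ Q_a for all a ∈ A), and let Λ^{f/0}, Λ^{f/1} be the reduced quantified scenarios obtained by substituting 0 (resp. 1) for the f-variable of φ and removing f. Then τ_m(Σ_Λ) = Ψ_F(τ_m(Σ_{Λ^{f/0}}), τ_m(Σ_{Λ^{f/1}}), π_f), where Ψ_F(I₁,I₂,p) = {((1−p)·p₁ + p·p₂, max(c₁,c₂)) : (p₁,c₁) ∈ I₁, (p₂,c₂) ∈ I₂}. -/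
open scoped ENNReal

variable {F A : Type}

/-!
Since `f` is observed before every action, a strategy for `Λ` is the same as a pair of strategies
for `Λ^{f/0}` and `Λ^{f/1}`, followed according to the value of `x_f`: restriction to the two
halves `x_f = 0`, `x_f = 1` of `𝔹^F` goes one way and `star` the other. Splitting `𝔹^F` into these
halves, the Bernoulli weight factors as `(1 - π_f)` resp. `π_f` times the weight on `𝔹^{F \ {f}}`,
so the success probability is the corresponding convex combination, while the maximal cost over
`𝔹^F` is the larger of the maxima over the two halves.
-/

section

variable [DecidableEq F]

/-- Spelled out rather than taken from `Equiv.funSplitAt`, to match `Scenario.reduceF`: this makes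
`Scenario.reduceF_φ` and `Strategy.isSplitAt_reduceF` hold by `rfl`. -/
def extendAt (f : F) (b : Bool) (x' : {g : F // g ≠ f} → Bool) : F → Bool :=
  fun g => if h : g = f then b else x' ⟨g, h⟩

lemma extendAt_eq_funSplitAt_symm (f : F) (b : Bool) (x' : {g : F // g ≠ f} → Bool) :
    extendAt f b x' = (Equiv.funSplitAt f Bool).symm (b, x') := by
  funext g
  by_cases h : g = f
  · subst h; simp [extendAt, Equiv.funSplitAt, Equiv.piSplitAt]
  · simp [extendAt, Equiv.funSplitAt, Equiv.piSplitAt, h]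

lemma Fintype.sum_eq_sum_extendAt [Fintype F] {M : Type*} [AddCommMonoid M]
    (g : (F → Bool) → M) (f : F) :
    ∑ x, g x = ∑ x', g (extendAt f false x') + ∑ x', g (extendAt f true x') := by
  rw [← (Equiv.funSplitAt f Bool).symm.sum_comp, Fintype.sum_prod_type, Fintype.sum_bool, add_comm]
  simp only [extendAt_eq_funSplitAt_symm]

lemma iSup_eq_iSup_extendAt {α : Type*} [CompleteLattice α] (g : (F → Bool) → α) (f : F) :
    ⨆ x, g x = (⨆ x', g (extendAt f false x')) ⊔ ⨆ x', g (extendAt f true x') := by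
  rw [← (Equiv.funSplitAt f Bool).symm.iSup_comp, iSup_prod, iSup_bool_eq, sup_comm]
  simp only [extendAt_eq_funSplitAt_symm]

lemma wght_extendAt [Fintype F] (π : F → ℝ≥0∞) (f : F) (b : Bool)
    (x' : {g : F // g ≠ f} → Bool) :
    wght π (extendAt f b x') = (if b then π f else 1 - π f) * wght (fun g => π g.1) x' := by
  rw [wght, Fintype.prod_eq_mul_prod_subtype_ne _ f]
  simp only [extendAt, dite_true]
  congr 1
  exact Fintype.prod_congr _ _ fun g => by simp [g.2]

lemma sum_wght_mul_eq_extendAt [Fintype F] (π : F → ℝ≥0∞) (f : F) (g : (F → Bool) → ℝ≥0∞) :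
    ∑ x, wght π x * g x =
      (1 - π f) * ∑ x', wght (fun g => π g.1) x' * g (extendAt f false x') +
        π f * ∑ x', wght (fun g => π g.1) x' * g (extendAt f true x') := by
  simp only [Fintype.sum_eq_sum_extendAt _ f, wght_extendAt, Finset.mul_sum, mul_assoc,
    Bool.false_eq_true, ↓reduceIte]

lemma restr_extendAt {Λ : Scenario F A} {f : F} (b b' : Bool) (a : A)
    (x' : {g : F // g ≠ f} → Bool) :
    restr Λ f b' a (fun p => extendAt f b x' p.1) = fun q => x' q.1 := by
  funext q
  simp [restr, extendAt, q.1.2]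

end

namespace Scenario

variable [DecidableEq F] {Λ : Scenario F A} {f : F}

lemma reduceF_φ (b : Bool) (x' : {g : F // g ≠ f} → Bool) (y : A → Bool) :
    (Λ.reduceF f b).φ x' y = Λ.φ (extendAt f b x') y :=
  rfl

def IsSplitAt (σ : Strategy Λ) (σ₀ : Strategy (Λ.reduceF f false))
    (σ₁ : Strategy (Λ.reduceF f true)) : Prop :=
  (∀ x', hatS Λ σ (extendAt f false x') = hatS (Λ.reduceF f false) σ₀ x') ∧
    ∀ x', hatS Λ σ (extendAt f true x') = hatS (Λ.reduceF f true) σ₁ x'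

variable {σ : Strategy Λ} {σ₀ : Strategy (Λ.reduceF f false)} {σ₁ : Strategy (Λ.reduceF f true)}

lemma IsSplitAt.probS_eq [Fintype F] (h : IsSplitAt σ σ₀ σ₁) (π : F → ℝ≥0∞) :
    probS Λ π σ = (1 - π f) * probS (Λ.reduceF f false) (fun g => π g.1) σ₀ +
      π f * probS (Λ.reduceF f true) (fun g => π g.1) σ₁ := by
  simp only [probS, sum_wght_mul_eq_extendAt π f, h.1, h.2, ← reduceF_φ]

lemma IsSplitAt.maxCost_eq [Fintype F] [Fintype A] (h : IsSplitAt σ σ₀ σ₁) (γ : A → ℝ≥0∞) :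
    maxCost Λ γ σ = max (maxCost (Λ.reduceF f false) γ σ₀) (maxCost (Λ.reduceF f true) γ σ₁) := by
  simp only [maxCost, costOf, iSup_eq_iSup_extendAt _ f, h.1, h.2]

lemma IsSplitAt.tauM_eq [Fintype F] [Fintype A] (h : IsSplitAt σ σ₀ σ₁) (π : F → ℝ≥0∞)
    (γ : A → ℝ≥0∞) :
    (probS Λ π σ, maxCost Λ γ σ) =
      psi (probS (Λ.reduceF f false) (fun g => π g.1) σ₀, maxCost (Λ.reduceF f false) γ σ₀)
        (probS (Λ.reduceF f true) (fun g => π g.1) σ₁, maxCost (Λ.reduceF f true) γ σ₁) (π f) :=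
  Prod.ext (h.probS_eq π) (h.maxCost_eq γ)

end Scenario

namespace Strategy

variable [DecidableEq F] {Λ : Scenario F A}

def reduceF (σ : Strategy Λ) (f : F) (b : Bool) : Strategy (Λ.reduceF f b) := fun a x' =>
  σ a fun p => if h : p.1 = f then b else x' ⟨⟨p.1, h⟩, Finset.mem_subtype.mpr p.2⟩

lemma isSplitAt_reduceF (σ : Strategy Λ) (f : F) :
    Λ.IsSplitAt σ (σ.reduceF f false) (σ.reduceF f true) :=
  ⟨fun _ => rfl, fun _ => rfl⟩

lemma isSplitAt_star (f : F) (hf : ∀ a, f ∈ Λ.Q a) (σ₀ : Strategy (Λ.reduceF f false))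
    (σ₁ : Strategy (Λ.reduceF f true)) :
    Λ.IsSplitAt (_root_.star Λ f hf σ₀ σ₁) σ₀ σ₁ := by
  constructor <;> intro x' <;> funext a <;> simp only [hatS, _root_.star, restr_extendAt] <;>
    simp [extendAt]

end Strategy

theorem range_tauM_eq_psiF_general [Fintype F] [Fintype A] [DecidableEq F]
    (Λ : Scenario F A) (π : F → ℝ≥0∞) (γ : A → ℝ≥0∞)
    (f : F) (hf : ∀ a, f ∈ Λ.Q a) :
    Set.range (fun σ : Strategy Λ => (probS Λ π σ, maxCost Λ γ σ)) =
      PsiF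
        (Set.range (fun σ0 : Strategy (Λ.reduceF f false) =>
          (probS (Λ.reduceF f false) (fun g => π g.1) σ0,
            maxCost (Λ.reduceF f false) γ σ0)))
        (Set.range (fun σ1 : Strategy (Λ.reduceF f true) =>
          (probS (Λ.reduceF f true) (fun g => π g.1) σ1,
            maxCost (Λ.reduceF f true) γ σ1)))
        (π f) := by
  ext d
  constructor
  · rintro ⟨σ, rfl⟩
    exact ⟨_, ⟨σ.reduceF f false, rfl⟩, _, ⟨σ.reduceF f true, rfl⟩,
      (σ.isSplitAt_reduceF f).tauM_eq π γ⟩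
  · rintro ⟨_, ⟨σ₀, rfl⟩, _, ⟨σ₁, rfl⟩, rfl⟩
    exact ⟨_root_.star Λ f hf σ₀ σ₁, (Strategy.isSplitAt_star f hf σ₀ σ₁).tauM_eq π γ⟩

/-- `τ_m(Σ_Λ) = Ψ_F(τ_m(Σ_{Λ^{f/0}}), τ_m(Σ_{Λ^{f/1}}), π_f)`. -/
theorem range_tauM_eq_psiF [Fintype F] [Fintype A] [DecidableEq F]
    (Λ : Scenario F A) (π : F → ℝ≥0∞) (hπ : ∀ g, π g ≤ 1) (γ : A → ℝ≥0∞)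
    (f : F) (hf : ∀ a, f ∈ Λ.Q a) :
    Set.range (fun σ : Strategy Λ => (probS Λ π σ, maxCost Λ γ σ)) =
      PsiF
        (Set.range (fun σ0 : Strategy (Λ.reduceF f false) =>
          (probS (Λ.reduceF f false) (fun g => π g.1) σ0,
            maxCost (Λ.reduceF f false) γ σ0)))
        (Set.range (fun σ1 : Strategy (Λ.reduceF f true) =>
          (probS (Λ.reduceF f true) (fun g => π g.1) σ1,
            maxCost (Λ.reduceF f true) γ σ1)))
        (π f) :=
  range_tauM_eq_psiF_general Λ π γ f hf
end

section
/- Let (Λ, π, γ) be a quantified scenario such that some f ∈ F is minimal in F ∪ A with respect to ≺_Q (i.e. f ∈ Q_a for all a ∈ A), and let Λ^{f/0}, Λ^{f/1} be the reduced quantified scenarios obtained by substituting 0 (resp. 1) for the f-variable of φ and removing f. Then τ_e(Σ_Λ) = Ψ_F^e(τ_e(Σ_{Λ^{f/0}}), τ_e(Σ_{Λ^{f/1}}), π_f), where Ψ_F^e(I₁,I₂,p) = {((1−p)·p₁ + p·p₂, (1−p)·c₁ + p·c₂) : (p₁,c₁) ∈ I₁, (p₂,c₂) ∈ I₂}. 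-/
open scoped ENNReal

variable {F A : Type}

/-- `Ψ_F^e(I₁,I₂,p) = {((1−p)·p₁ + p·p₂, (1−p)·c₁ + p·c₂) : (p₁,c₁) ∈ I₁, (p₂,c₂) ∈ I₂}`. -/
noncomputable def PsiFe (I₁ I₂ : Set (ℝ≥0∞ × ℝ≥0∞)) (p : ℝ≥0∞) : Set (ℝ≥0∞ × ℝ≥0∞) :=
  {d | ∃ d₁ ∈ I₁, ∃ d₂ ∈ I₂, d = ((1 - p) * d₁.1 + p * d₂.1, (1 - p) * d₁.2 + p * d₂.2)}

section Aux

variable [DecidableEq F]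

/-- Extend `y : 𝔹^{F \ {f}}` to `𝔹^F` by setting the `f`-coordinate to `b`. -/
def extF (f : F) (b : Bool) (y : {g : F // g ≠ f} → Bool) : F → Bool :=
  fun g => if h : g = f then b else y ⟨g, h⟩

/-- The equivalence `𝔹^F ≃ 𝔹 × 𝔹^{F \ {f}}`. -/
def eqvF (f : F) : (F → Bool) ≃ Bool × ({g : F // g ≠ f} → Bool) where
  toFun x := (x f, fun g => x g.1)
  invFun p := extF f p.1 p.2
  left_inv x := funext fun g => by
    by_cases h : g = f <;> simp [extF, h]
  right_inv p := by
    refine Prod.ext ?_ (funext fun g => ?_)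
    · simp [extF]
    · simp [extF, g.2]

/-- The slice of a strategy along `x_f = b`. -/
def sliceS (Λ : Scenario F A) (f : F) (b : Bool) (σ : Strategy Λ) :
    Strategy (Λ.reduceF f b) := fun a z =>
  σ a fun f' => if h : f'.1 = f then b else z ⟨⟨f'.1, h⟩, Finset.mem_subtype.mpr f'.2⟩

lemma hatS_slice (Λ : Scenario F A) (f : F) (b : Bool) (σ : Strategy Λ)
    (y : {g : F // g ≠ f} → Bool) :
    hatS Λ σ (extF f b y) = hatS (Λ.reduceF f b) (sliceS Λ f b σ) y := rfl

lemma wght_ext [Fintype F] (π : F → ℝ≥0∞) (f : F) (b : Bool)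
    (y : {g : F // g ≠ f} → Bool) :
    wght π (extF f b y) =
      (if b then π f else 1 - π f) * wght (fun g : {g : F // g ≠ f} => π g.1) y := by
  unfold wght
  rw [Fintype.prod_eq_mul_prod_compl f]
  congr 1
  · simp [extF]
  · rw [Finset.prod_subtype ({f}ᶜ : Finset F) (p := fun g => g ≠ f) (fun g => by simp)
      (fun g => if extF f b y g then π g else 1 - π g)]
    apply Finset.prod_congr rfl
    intro g _
    simp [extF, g.2]

lemma sum_split [Fintype F] (f : F) (G : (F → Bool) → ℝ≥0∞) :
    ∑ x : F → Bool, G x =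
      (∑ y : {g : F // g ≠ f} → Bool, G (extF f false y)) +
        ∑ y : {g : F // g ≠ f} → Bool, G (extF f true y) := by
  rw [← Equiv.sum_comp (eqvF f).symm G, Fintype.sum_prod_type, Fintype.sum_bool]
  exact add_comm _ _

lemma probS_split [Fintype F] (Λ : Scenario F A) (π : F → ℝ≥0∞) (f : F)
    (σ : Strategy Λ) :
    probS Λ π σ =
      (1 - π f) * probS (Λ.reduceF f false) (fun g => π g.1) (sliceS Λ f false σ) +
        π f * probS (Λ.reduceF f true) (fun g => π g.1) (sliceS Λ f true σ) := by
  unfold probS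
  rw [sum_split f, Finset.mul_sum, Finset.mul_sum]
  congr 1 <;> apply Finset.sum_congr rfl <;> intro y _ <;>
    rw [wght_ext, mul_assoc] <;> rfl

lemma costOf_slice [Fintype A] (Λ : Scenario F A) (γ : A → ℝ≥0∞) (f : F) (b : Bool)
    (σ : Strategy Λ) (y : {g : F // g ≠ f} → Bool) :
    costOf Λ γ σ (extF f b y) = costOf (Λ.reduceF f b) γ (sliceS Λ f b σ) y := by
  unfold costOf
  rw [hatS_slice]

lemma expCost_split [Fintype F] [Fintype A] (Λ : Scenario F A) (π : F → ℝ≥0∞)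
    (γ : A → ℝ≥0∞) (f : F) (σ : Strategy Λ) :
    expCost Λ π γ σ =
      (1 - π f) * expCost (Λ.reduceF f false) (fun g => π g.1) γ (sliceS Λ f false σ) +
        π f * expCost (Λ.reduceF f true) (fun g => π g.1) γ (sliceS Λ f true σ) := by
  unfold expCost
  rw [sum_split f, Finset.mul_sum, Finset.mul_sum]
  congr 1 <;> apply Finset.sum_congr rfl <;> intro y _ <;>
    rw [wght_ext, costOf_slice, mul_assoc] <;> rfl

lemma slice_star_false (Λ : Scenario F A) (f : F) (hf : ∀ a, f ∈ Λ.Q a)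
    (σ0 : Strategy (Λ.reduceF f false)) (σ1 : Strategy (Λ.reduceF f true)) :
    sliceS Λ f false (_root_.star Λ f hf σ0 σ1) = σ0 := by
  funext a z
  have hres : (restr Λ f false a
      fun f' => if h : f'.1 = f then false
        else z ⟨⟨f'.1, h⟩, Finset.mem_subtype.mpr f'.2⟩) = z := by
    funext g
    simp [restr, g.1.2]
  simp [sliceS, _root_.star, hres]

lemma slice_star_true (Λ : Scenario F A) (f : F) (hf : ∀ a, f ∈ Λ.Q a)
    (σ0 : Strategy (Λ.reduceF f false)) (σ1 : Strategy (Λ.reduceF f true)) :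
    sliceS Λ f true (_root_.star Λ f hf σ0 σ1) = σ1 := by
  funext a z
  have hres : (restr Λ f true a
      fun f' => if h : f'.1 = f then true
        else z ⟨⟨f'.1, h⟩, Finset.mem_subtype.mpr f'.2⟩) = z := by
    funext g
    simp [restr, g.1.2]
  simp [sliceS, _root_.star, hres]

end Aux

/-- `τ_e(Σ_Λ) = Ψ_F^e(τ_e(Σ_{Λ^{f/0}}), τ_e(Σ_{Λ^{f/1}}), π_f)`. -/
theorem range_tauE_eq_psiFe [Fintype F] [Fintype A] [DecidableEq F]
    (Λ : Scenario F A) (π : F → ℝ≥0∞) (hπ : ∀ g, π g ≤ 1) (γ : A → ℝ≥0∞)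
    (f : F) (hf : ∀ a, f ∈ Λ.Q a) :
    Set.range (fun σ : Strategy Λ => (probS Λ π σ, expCost Λ π γ σ)) =
      PsiFe
        (Set.range (fun σ0 : Strategy (Λ.reduceF f false) =>
          (probS (Λ.reduceF f false) (fun g => π g.1) σ0,
            expCost (Λ.reduceF f false) (fun g => π g.1) γ σ0)))
        (Set.range (fun σ1 : Strategy (Λ.reduceF f true) =>
          (probS (Λ.reduceF f true) (fun g => π g.1) σ1,
            expCost (Λ.reduceF f true) (fun g => π g.1) γ σ1)))
        (π f) := by
  ext d
  constructor
  · rintro ⟨σ, rfl⟩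
    exact ⟨_, ⟨sliceS Λ f false σ, rfl⟩, _, ⟨sliceS Λ f true σ, rfl⟩,
      Prod.ext (probS_split Λ π f σ) (expCost_split Λ π γ f σ)⟩
  · rintro ⟨d₁, ⟨σ0, rfl⟩, d₂, ⟨σ1, rfl⟩, rfl⟩
    refine ⟨_root_.star Λ f hf σ0 σ1, ?_⟩
    simp only [probS_split Λ π f, expCost_split Λ π γ f, slice_star_false, slice_star_true]
end

section
/- Let (Λ, π, γ) be a quantified scenario such that some a ∈ A is minimal in F ∪ A with respect to ≺_Q, i.e. Q_a = ∅, and let Λ^{a/0}, Λ^{a/1} be the reduced quantified scenarios obtained by substituting 0 (resp. 1) for the a-variable of φ and removing a. Then τ_m(Σ_Λ) = Ψ_A(τ_m(Σ_{Λ^{a/0}}), τ_m(Σ_{Λ^{a/1}}), γ_a), where Ψ_A(I₁,I₂,c) = I₁ ∪ {(p₂, c₂ + c) : (p₂,c₂) ∈ I₂}. -/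
open scoped ENNReal

variable {F A : Type}

/-- The reduced scenario `Λ^{a/b}`: substitute `b` for the `a`-variable of `φ`
and remove `a` from `A`. -/
def Scenario.reduceA [DecidableEq A] (Λ : Scenario F A) (a : A) (b : Bool) :
    Scenario F {a' : A // a' ≠ a} where
  φ := fun x y => Λ.φ x (fun a' => if h : a' = a then b else y ⟨a', h⟩)
  Q := fun a' => Λ.Q a'.1
  chain := fun a' a'' => Λ.chain a'.1 a''.1

/-- The lifted strategy `ι(σ)`: set `σ_a` identically equal to `b` and leave `σ_{a'}`
unchanged for `a' ≠ a`. -/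
def iota [DecidableEq A] (Λ : Scenario F A) (a : A) (b : Bool)
    (σ : Strategy (Λ.reduceA a b)) : Strategy Λ :=
  fun a' x => if h : a' = a then b else σ ⟨a', h⟩ x

/-- `Ψ_A(I₁,I₂,c) = I₁ ∪ {(p₂, c₂ + c) : (p₂,c₂) ∈ I₂}`. -/
def PsiA (I₁ I₂ : Set (ℝ≥0∞ × ℝ≥0∞)) (c : ℝ≥0∞) : Set (ℝ≥0∞ × ℝ≥0∞) :=
  I₁ ∪ {d | ∃ d₂ ∈ I₂, d = (d₂.1, d₂.2 + c)}

/-!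
Since `Q_a = ∅`, the decision `σ_a` observes nothing, so it is a constant `b ∈ 𝔹`, and every
strategy of `Λ` is the lift `ι(σ')` of a strategy `σ'` of `Λ^{a/b}`. The lift does not change the
success probability, and it adds the constant cost `γ_a` to every outcome exactly when `b = 1`.
-/

section Lift

variable [DecidableEq A] (Λ : Scenario F A) (a : A) (b : Bool)

lemma probS_iota [Fintype F] [DecidableEq F] (π : F → ℝ≥0∞) (σ : Strategy (Λ.reduceA a b)) :
    probS Λ π (iota Λ a b σ) = probS (Λ.reduceA a b) π σ := rfl

lemma costOf_iota [Fintype A] (γ : A → ℝ≥0∞) (σ : Strategy (Λ.reduceA a b)) (x : F → Bool) :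
    costOf Λ γ (iota Λ a b σ) x =
      costOf (Λ.reduceA a b) (fun a' => γ a'.1) σ x + (if b then γ a else 0) := by
  unfold costOf
  rw [Fintype.sum_eq_add_sum_compl a, add_comm,
    Finset.sum_subtype (p := (· ≠ a)) ({a}ᶜ : Finset A) (by simp)]
  congr 1
  · refine Finset.sum_congr rfl fun a' _ => ?_
    simp only [hatS, iota, dif_neg a'.2]
    rfl
  · simp [hatS, iota]

lemma maxCost_iota [Fintype F] [DecidableEq F] [Fintype A] (γ : A → ℝ≥0∞)
    (σ : Strategy (Λ.reduceA a b)) :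
    maxCost Λ γ (iota Λ a b σ) =
      maxCost (Λ.reduceA a b) (fun a' => γ a'.1) σ + (if b then γ a else 0) := by
  rw [maxCost, maxCost, ENNReal.iSup_add]
  exact iSup_congr (costOf_iota Λ a b γ σ)

end Lift

lemma exists_iota_eq_of_Q_eq_empty [DecidableEq A] (Λ : Scenario F A) (a : A)
    (hQa : Λ.Q a = ∅) (σ : Strategy Λ) :
    ∃ (b : Bool) (σ' : Strategy (Λ.reduceA a b)), iota Λ a b σ' = σ := by
  have : IsEmpty {f : F // f ∈ Λ.Q a} := ⟨fun f => by simpa [hQa] using f.2⟩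
  refine ⟨σ a isEmptyElim, fun a' x => σ a'.1 x, funext fun a' => funext fun x => ?_⟩
  by_cases h : a' = a
  · subst h
    simp only [iota]
    exact congrArg (σ a') (Subsingleton.elim _ _)
  · simp only [iota, dif_neg h]

theorem range_tauM_eq_psiA_general [Fintype F] [Fintype A] [DecidableEq F] [DecidableEq A]
    (Λ : Scenario F A) (π : F → ℝ≥0∞) (γ : A → ℝ≥0∞)
    (a : A) (hQa : Λ.Q a = ∅) :
    Set.range (fun σ : Strategy Λ => (probS Λ π σ, maxCost Λ γ σ)) =
      PsiA
        (Set.range (fun σ0 : Strategy (Λ.reduceA a false) =>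
          (probS (Λ.reduceA a false) π σ0,
            maxCost (Λ.reduceA a false) (fun a' => γ a'.1) σ0)))
        (Set.range (fun σ1 : Strategy (Λ.reduceA a true) =>
          (probS (Λ.reduceA a true) π σ1,
            maxCost (Λ.reduceA a true) (fun a' => γ a'.1) σ1)))
        (γ a) := by
  ext d
  constructor
  · rintro ⟨σ, rfl⟩
    obtain ⟨b, σ', rfl⟩ := exists_iota_eq_of_Q_eq_empty Λ a hQa σ
    cases b
    · exact Or.inl ⟨σ', by simp [probS_iota, maxCost_iota]⟩
    · exact Or.inr ⟨_, ⟨σ', rfl⟩, by simp [probS_iota, maxCost_iota]⟩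
  · rintro (⟨σ0, rfl⟩ | ⟨d₂, ⟨σ1, rfl⟩, rfl⟩)
    · exact ⟨iota Λ a false σ0, by simp [probS_iota, maxCost_iota]⟩
    · exact ⟨iota Λ a true σ1, by simp [probS_iota, maxCost_iota]⟩

/-- `τ_m(Σ_Λ) = Ψ_A(τ_m(Σ_{Λ^{a/0}}), τ_m(Σ_{Λ^{a/1}}), γ_a)`. -/
theorem range_tauM_eq_psiA [Fintype F] [Fintype A] [DecidableEq F] [DecidableEq A]
    (Λ : Scenario F A) (π : F → ℝ≥0∞) (hπ : ∀ g, π g ≤ 1) (γ : A → ℝ≥0∞)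
    (a : A) (hQa : Λ.Q a = ∅) :
    Set.range (fun σ : Strategy Λ => (probS Λ π σ, maxCost Λ γ σ)) =
      PsiA
        (Set.range (fun σ0 : Strategy (Λ.reduceA a false) =>
          (probS (Λ.reduceA a false) π σ0,
            maxCost (Λ.reduceA a false) (fun a' => γ a'.1) σ0)))
        (Set.range (fun σ1 : Strategy (Λ.reduceA a true) =>
          (probS (Λ.reduceA a true) π σ1,
            maxCost (Λ.reduceA a true) (fun a' => γ a'.1) σ1)))
        (γ a) :=
  range_tauM_eq_psiA_general Λ π γ a hQa
end

section
/- Let (Λ, π, γ) be a quantified scenario with all costs γ_a finite, such that some a ∈ A is minimal in F ∪ A with respect to ≺_Q, i.e. Q_a = ∅, and let Λ^{a/0}, Λ^{a/1} be the reduced quantified scenarios obtained by substituting 0 (resp. 1) for the a-variable of φ and removing a. Then the probability–expected-cost Pareto front satisfies the recursion PEC(Λ̂) = SCPF(Ψ_A(PEC(Λ̂^{a/0}), PEC(Λ̂^{a/1}), γ_a)), where Ψ_A(I₁,I₂,c) = I₁ ∪ {(p₂, c₂ + c) : (p₂,c₂) ∈ I₂}. -/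
variable {F A : Type}

/-- Bernoulli weight of an outcome `x ∈ 𝔹^F` (real-valued). -/
noncomputable def wghtR [Fintype F] (π : F → ℝ) (x : F → Bool) : ℝ :=
  ∏ f, if x f then π f else 1 - π f

/-- Success probability `π̂(σ)` (real-valued). -/
noncomputable def probR [Fintype F] [DecidableEq F] (Λ : Scenario F A)
    (π : F → ℝ) (σ : Strategy Λ) : ℝ :=
  ∑ x : F → Bool, wghtR π x * (if Λ.φ x (hatS Λ σ x) then 1 else 0)

/-- Expected cost `γ̂_e(σ)` (real-valued, costs finite). -/
noncomputable def expCostR [Fintype F] [DecidableEq F] [Fintype A] (Λ : Scenario F A)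
    (π : F → ℝ) (γ : A → ℝ) (σ : Strategy Λ) : ℝ :=
  ∑ x : F → Bool, wghtR π x * ∑ a, if hatS Λ σ x a then γ a else 0

/-- `(p,c) ⊑ (p',c')` iff `p ≥ p'` and `c ≤ c'` (on `D = [0,1] × [0,∞) ⊆ ℝ²`). -/
def sqleR (d d' : ℝ × ℝ) : Prop := d'.1 ≤ d.1 ∧ d.2 ≤ d'.2

/-- `d ⊏ d'` iff `d ⊑ d'` and `d ≠ d'`. -/
def sltR (d d' : ℝ × ℝ) : Prop := sqleR d d' ∧ d ≠ d'

/-- The line segment `ℓ(d₁,d₂) = {t·d₁ + (1−t)·d₂ : t ∈ [0,1]}` in `ℝ²`. -/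
def seg (d₁ d₂ : ℝ × ℝ) : Set (ℝ × ℝ) :=
  {d | ∃ t ∈ Set.Icc (0 : ℝ) 1, d = t • d₁ + (1 - t) • d₂}

/-- The strictly convex Pareto front
`SCPF(I) = {d ∈ I : ∀ d₁ d₂ ∈ I, ∀ d' ∈ ℓ(d₁,d₂), ¬(d' ⊏ d)}`. -/
def SCPF (I : Set (ℝ × ℝ)) : Set (ℝ × ℝ) :=
  {d ∈ I | ∀ d₁ ∈ I, ∀ d₂ ∈ I, ∀ d' ∈ seg d₁ d₂, ¬ sltR d' d}

/-- `Ψ_A(I₁,I₂,c) = I₁ ∪ {(p₂, c₂ + c) : (p₂,c₂) ∈ I₂}` (real-valued). -/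
def PsiAR (I₁ I₂ : Set (ℝ × ℝ)) (c : ℝ) : Set (ℝ × ℝ) :=
  I₁ ∪ {d | ∃ d₂ ∈ I₂, d = (d₂.1, d₂.2 + c)}

set_option linter.unusedSectionVars false in
section
namespace PECaux


noncomputable def lin (α β : ℝ) (d : ℝ × ℝ) : ℝ := α * d.1 - β * d.2

lemma self_mem_seg (s : ℝ × ℝ) : s ∈ seg s s :=
  ⟨1, ⟨zero_le_one, le_refl 1⟩, by simp⟩

lemma SCPF_subset (I : Set (ℝ × ℝ)) : SCPF I ⊆ I := fun _ h => h.1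

lemma lin_seg_le {α β m : ℝ} {d₁ d₂ d' : ℝ × ℝ} (h : d' ∈ seg d₁ d₂)
    (h1 : lin α β d₁ ≤ m) (h2 : lin α β d₂ ≤ m) : lin α β d' ≤ m := by
  obtain ⟨t, ⟨ht0, ht1⟩, rfl⟩ := h
  simp only [lin, Prod.fst_add, Prod.snd_add, Prod.smul_fst, Prod.smul_snd, smul_eq_mul] at *
  nlinarith

lemma sltR_lin_lt {α β : ℝ} (hα : 0 < α) (hβ : 0 < β) {d' d : ℝ × ℝ}
    (h : sltR d' d) : lin α β d < lin α β d' := by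
  obtain ⟨⟨h1, h2⟩, hne⟩ := h
  have : d'.1 ≠ d.1 ∨ d'.2 ≠ d.2 := by
    by_contra hc
    push_neg at hc
    exact hne (Prod.ext hc.1 hc.2)
  simp only [lin]
  rcases this with h | h
  · nlinarith [lt_of_le_of_ne h1 (Ne.symm h) ]
  · have : d'.2 < d.2 := lt_of_le_of_ne h2 h
    nlinarith
  
lemma maximizer_mem_SCPF {α β : ℝ} (hα : 0 < α) (hβ : 0 < β) {S : Set (ℝ × ℝ)} {d : ℝ × ℝ}
    (hd : d ∈ S) (hmax : ∀ s ∈ S, lin α β s ≤ lin α β d) : d ∈ SCPF S := by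
  refine ⟨hd, fun d₁ h₁ d₂ h₂ d' hd' hlt => ?_⟩
  have := lin_seg_le hd' (hmax d₁ h₁) (hmax d₂ h₂)
  have := sltR_lin_lt hα hβ hlt
  linarith

lemma no_dom {S : Set (ℝ × ℝ)} {d : ℝ × ℝ} (hd : d ∈ SCPF S) {s : ℝ × ℝ} (hs : s ∈ S) :
    ¬ sltR s d := fun h => hd.2 s hs s hs s (self_mem_seg s) h

lemma vert_le {S : Set (ℝ × ℝ)} {d : ℝ × ℝ} (hd : d ∈ SCPF S) {s : ℝ × ℝ} (hs : s ∈ S)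
    (h : d.1 ≤ s.1) (hne : s ≠ d) : d.2 < s.2 := by
  by_contra hc
  push_neg at hc
  exact no_dom hd hs ⟨⟨h, hc⟩, hne⟩

lemma no_cross {S : Set (ℝ × ℝ)} {d sl su : ℝ × ℝ} (hd : d ∈ SCPF S)
    (hsl : sl ∈ S) (hsu : su ∈ S) (h1 : sl.1 < d.1) (h2 : d.1 < su.1)
    (hr : (su.2 - d.2) / (su.1 - d.1) < (sl.2 - d.2) / (sl.1 - d.1)) : False := by
  set a : ℝ := d.1 - sl.1 with ha
  set b : ℝ := su.1 - d.1 with hb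
  have ha0 : 0 < a := by simp [ha]; linarith
  have hb0 : 0 < b := by simp [hb]; linarith
  have hab : 0 < a + b := by linarith
  -- rewrite hr
  have hr' : a * (su.2 - d.2) < b * (d.2 - sl.2) := by
    have e1 : (sl.2 - d.2) / (sl.1 - d.1) = (d.2 - sl.2) / a := by
      rw [ha, show d.2 - sl.2 = -(sl.2 - d.2) by ring,
        show d.1 - sl.1 = -(sl.1 - d.1) by ring, neg_div_neg_eq]
    rw [e1, div_lt_div_iff₀ hb0 ha0] at hr
    linarith
  set t : ℝ := b / (a + b) with htdef
  have ht0 : 0 ≤ t := div_nonneg hb0.le hab.le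
  have ht1 : t ≤ 1 := by rw [htdef, div_le_one hab]; linarith
  set e : ℝ × ℝ := t • sl + (1 - t) • su with he
  have he1 : e.1 = d.1 := by
    simp only [he, Prod.fst_add, Prod.smul_fst, smul_eq_mul, htdef]
    field_simp
    rw [ha, hb]; ring
  have he2 : e.2 < d.2 := by
    have : e.2 = (b * sl.2 + a * su.2) / (a + b) := by
      simp only [he, Prod.snd_add, Prod.smul_snd, smul_eq_mul, htdef]
      field_simp
      ring
    rw [this, div_lt_iff₀ hab]
    nlinarith
  exact hd.2 sl hsl su hsu e ⟨t, ⟨ht0, ht1⟩, rfl⟩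
    ⟨⟨he1.ge, he2.le⟩, fun hc => by rw [hc] at he2; exact lt_irrefl _ he2⟩

lemma exists_lin (S : Set (ℝ × ℝ)) (hS : S.Finite) {d : ℝ × ℝ} (hd : d ∈ SCPF S) :
    ∃ α β : ℝ, 0 < α ∧ 0 < β ∧ ∀ s ∈ S, lin α β s ≤ lin α β d := by
  classical
  set T := hS.toFinset with hT
  have hmemT : ∀ s : ℝ × ℝ, s ∈ T ↔ s ∈ S := fun s => hS.mem_toFinset
  set r : ℝ × ℝ → ℝ := fun s => (s.2 - d.2) / (s.1 - d.1) with hrdef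
  set Tu := T.filter (fun s => d.1 < s.1) with hTu
  set Td := T.filter (fun s => s.1 < d.1) with hTd
  have main : ∀ αc : ℝ, 0 < αc → (∀ s ∈ Tu, αc ≤ r s) → (∀ s ∈ Td, r s ≤ αc) →
      ∀ s ∈ S, lin αc 1 s ≤ lin αc 1 d := by
    intro αc hpos hu hdn s hs
    simp only [lin, one_mul]
    rcases lt_trichotomy s.1 d.1 with h | h | h
    · have hsd : s ∈ Td := by
        rw [hTd, Finset.mem_filter]; exact ⟨(hmemT s).2 hs, h⟩
      have := hdn s hsd
      rw [hrdef] at this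
      simp only at this
      have hneg : s.1 - d.1 < 0 := by linarith
      rw [div_le_iff_of_neg hneg] at this
      linarith
    · have : s ≠ d → d.2 < s.2 := vert_le hd hs h.ge
      by_cases hne : s = d
      · rw [hne]
      · have := this hne; rw [h]; linarith
    · have hsu : s ∈ Tu := by
        rw [hTu, Finset.mem_filter]; exact ⟨(hmemT s).2 hs, h⟩
      have := hu s hsu
      rw [hrdef] at this
      simp only at this
      have hpos' : 0 < s.1 - d.1 := by linarith
      rw [le_div_iff₀ hpos'] at this
      linarith
  by_cases hTuN : Tu.Nonempty
  · set U := Tu.inf' hTuN r with hU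
    have hU0 : 0 < U := by
      rw [hU, Finset.lt_inf'_iff]
      intro s hs
      rw [hTu, Finset.mem_filter] at hs
      have hs1 : d.1 < s.1 := hs.2
      have hs2 : d.2 < s.2 := vert_le hd ((hmemT s).1 hs.1) hs1.le
        (fun hc => by rw [hc] at hs1; exact lt_irrefl _ hs1)
      exact div_pos (by linarith) (by linarith)
    have hkey : ∀ s ∈ Td, r s ≤ U := by
      intro s hs
      by_contra hc
      push_neg at hc
      obtain ⟨su, hsuT, hUeq⟩ := Finset.exists_mem_eq_inf' hTuN r
      rw [hTd, Finset.mem_filter] at hs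
      rw [hTu, Finset.mem_filter] at hsuT
      refine no_cross hd ((hmemT s).1 hs.1) ((hmemT su).1 hsuT.1) hs.2 hsuT.2 ?_
      show r su < r s
      calc r su = Tu.inf' hTuN r := hUeq.symm
        _ < r s := hc
    exact ⟨U, 1, hU0, one_pos, main U hU0 (fun s hs => Finset.inf'_le r hs) hkey⟩
  · by_cases hTdN : Td.Nonempty
    · set L := Td.sup' hTdN r with hL
      set αc := max L 1 with hαc
      have hpos : 0 < αc := lt_of_lt_of_le one_pos (le_max_right _ _)
      refine ⟨αc, 1, hpos, one_pos, main αc hpos ?_ ?_⟩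
      · intro s hs; exact absurd ⟨s, hs⟩ hTuN
      · intro s hs
        exact le_trans (Finset.le_sup' r hs) (le_max_left _ _)
    · refine ⟨1, 1, one_pos, one_pos, main 1 one_pos ?_ ?_⟩
      · intro s hs; exact absurd ⟨s, hs⟩ hTuN
      · intro s hs; exact absurd ⟨s, hs⟩ hTdN

lemma SCPF_union (X K : Set (ℝ × ℝ)) (hX : X.Finite) (hK : K.Finite) :
    SCPF (X ∪ K) = SCPF (SCPF X ∪ SCPF K) := by
  ext d
  constructor
  · rintro ⟨hd, hdom⟩
    have hmem : d ∈ SCPF X ∪ SCPF K := by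
      rcases hd with h | h
      · exact Or.inl ⟨h, fun d₁ h₁ d₂ h₂ d' hd' => hdom d₁ (Or.inl h₁) d₂ (Or.inl h₂) d' hd'⟩
      · exact Or.inr ⟨h, fun d₁ h₁ d₂ h₂ d' hd' => hdom d₁ (Or.inr h₁) d₂ (Or.inr h₂) d' hd'⟩
    refine ⟨hmem, fun d₁ h₁ d₂ h₂ d' hd' => ?_⟩
    have sub : SCPF X ∪ SCPF K ⊆ X ∪ K :=
      Set.union_subset_union (SCPF_subset X) (SCPF_subset K)
    exact hdom d₁ (sub h₁) d₂ (sub h₂) d' hd'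
  · intro hd
    obtain ⟨α, β, hα, hβ, hmax⟩ := exists_lin _
      ((hX.subset (SCPF_subset X)).union (hK.subset (SCPF_subset K))) hd
    have hall : ∀ s ∈ X ∪ K, lin α β s ≤ lin α β d := by
      have hone : ∀ (Y : Set (ℝ × ℝ)), Y.Finite → SCPF Y ⊆ SCPF X ∪ SCPF K →
          (SCPF Y ⊆ SCPF X ∪ SCPF K) → ∀ s ∈ Y, lin α β s ≤ lin α β d := by
        intro Y hY hsub _ s hs
        obtain ⟨m, hmT, hm⟩ := Finset.exists_max_image hY.toFinset (lin α β)
          ⟨s, hY.mem_toFinset.2 hs⟩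
        have hmY : m ∈ Y := hY.mem_toFinset.1 hmT
        have hmSCPF : m ∈ SCPF Y :=
          maximizer_mem_SCPF hα hβ hmY (fun s' hs' => hm s' (hY.mem_toFinset.2 hs'))
        calc lin α β s ≤ lin α β m := hm s (hY.mem_toFinset.2 hs)
          _ ≤ lin α β d := hmax m (hsub hmSCPF)
      intro s hs
      rcases hs with h | h
      · exact hone X hX (fun _ hx => Or.inl hx) (fun _ hx => Or.inl hx) s h
      · exact hone K hK (fun _ hx => Or.inr hx) (fun _ hx => Or.inr hx) s h
    exact maximizer_mem_SCPF hα hβ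
      ((Set.union_subset_union (SCPF_subset X) (SCPF_subset K)) hd.1) hall



def shf (c : ℝ) (d : ℝ × ℝ) : ℝ × ℝ := (d.1, d.2 + c)

instance instFiniteStrategy [Finite F] [Finite A] (Λ : Scenario F A) :
    Finite (Strategy Λ) := by
  unfold Strategy; infer_instance

lemma sum_wghtR [Fintype F] [DecidableEq F] (π : F → ℝ) :
    ∑ x : F → Bool, wghtR π x = 1 := by
  unfold wghtR
  rw [← Fintype.prod_sum (fun (f : F) (b : Bool) => if b then π f else 1 - π f)]
  simp

variable [Fintype F] [Fintype A] [DecidableEq F] [DecidableEq A]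

lemma prob_iota (Λ : Scenario F A) (π : F → ℝ) (a : A) (b : Bool)
    (σ' : Strategy (Λ.reduceA a b)) :
    probR Λ π (iota Λ a b σ') = probR (Λ.reduceA a b) π σ' := rfl

lemma expCost_iota (Λ : Scenario F A) (π : F → ℝ) (γ : A → ℝ) (a : A) (b : Bool)
    (σ' : Strategy (Λ.reduceA a b)) :
    expCostR Λ π γ (iota Λ a b σ') =
      expCostR (Λ.reduceA a b) π (fun a' => γ a'.1) σ' + (if b then γ a else 0) := by
  unfold expCostR
  have hx : ∀ x : F → Bool,
      (∑ a', if hatS Λ (iota Λ a b σ') x a' then γ a' else 0)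
      = (if b then γ a else 0)
        + ∑ a' : {a' : A // a' ≠ a}, (if hatS (Λ.reduceA a b) σ' x a' then γ a'.1 else 0) := by
    intro x
    rw [Fintype.sum_eq_add_sum_compl a]
    congr 1
    · simp [hatS, iota]
    · rw [Finset.sum_subtype (p := fun a' => a' ≠ a) ({a}ᶜ : Finset A) (fun x => by simp)
        (fun a' => if hatS Λ (iota Λ a b σ') x a' then γ a' else 0)]
      apply Finset.sum_congr rfl
      intro i _
      have h2 : hatS Λ (iota Λ a b σ') x i.1 = hatS (Λ.reduceA a b) σ' x i := by
        simp only [hatS, iota]; rw [dif_neg i.2]; rfl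
      rw [h2]
  simp_rw [hx, mul_add]
  rw [Finset.sum_add_distrib, ← Finset.sum_mul, sum_wghtR, one_mul, add_comm]

lemma sigma_eq_iota (Λ : Scenario F A) (a : A) (hQa : Λ.Q a = ∅) (σ : Strategy Λ)
    (b : Bool) (hb : σ a (fun _ => false) = b) :
    σ = iota Λ a b (fun a' y => σ a'.1 y) := by
  funext a' y
  by_cases h : a' = a
  · subst h
    show σ a' y = if h : a' = a' then b else _
    rw [dif_pos rfl, ← hb]
    congr 1
    funext f
    exact absurd (hQa ▸ f.2 : f.1 ∈ (∅ : Finset F)) (Finset.notMem_empty f.1)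
  · show σ a' y = if hh : a' = a then b else _
    rw [dif_neg h]

lemma range_eq (Λ : Scenario F A) (π : F → ℝ) (γ : A → ℝ) (a : A) (hQa : Λ.Q a = ∅) :
    Set.range (fun σ : Strategy Λ => (probR Λ π σ, expCostR Λ π γ σ)) =
      Set.range (fun σ0 : Strategy (Λ.reduceA a false) =>
        (probR (Λ.reduceA a false) π σ0, expCostR (Λ.reduceA a false) π (fun a' => γ a'.1) σ0))
      ∪ shf (γ a) '' Set.range (fun σ1 : Strategy (Λ.reduceA a true) =>
        (probR (Λ.reduceA a true) π σ1, expCostR (Λ.reduceA a true) π (fun a' => γ a'.1) σ1)) := by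
  apply Set.eq_of_subset_of_subset
  · rintro _ ⟨σ, rfl⟩
    rcases hbb : σ a (fun _ => false) with _ | _
    · left
      refine ⟨fun a' y => σ a'.1 y, ?_⟩
      conv_rhs => rw [sigma_eq_iota Λ a hQa σ false hbb]
      simp only [prob_iota, expCost_iota]
      simp
      exact ⟨rfl, by have := expCost_iota Λ π γ a false (fun a' y => σ a'.1 y); simp at this; exact this.symm⟩
    · right
      refine ⟨_, ⟨fun a' y => σ a'.1 y, rfl⟩, ?_⟩
      conv_rhs => rw [sigma_eq_iota Λ a hQa σ true hbb]
      simp only [prob_iota, expCost_iota]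
      simp [shf]
      exact ⟨rfl, by have := expCost_iota Λ π γ a true (fun a' y => σ a'.1 y); simp at this; exact this.symm⟩
  · rintro d (⟨σ0, rfl⟩ | ⟨_, ⟨σ1, rfl⟩, rfl⟩)
    · exact ⟨iota Λ a false σ0, by simp only [prob_iota, expCost_iota]; simp⟩
    · exact ⟨iota Λ a true σ1, by simp only [prob_iota, expCost_iota]; simp [shf]⟩


lemma shf_comb (c t : ℝ) (d₁ d₂ : ℝ × ℝ) :
    shf c (t • d₁ + (1 - t) • d₂) = t • shf c d₁ + (1 - t) • shf c d₂ := by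
  simp only [shf, Prod.ext_iff, Prod.fst_add, Prod.snd_add, Prod.smul_fst,
    Prod.smul_snd, smul_eq_mul]
  constructor
  · trivial
  · ring

lemma seg_shf (c : ℝ) (d₁ d₂ : ℝ × ℝ) : seg (shf c d₁) (shf c d₂) = shf c '' seg d₁ d₂ := by
  ext e
  constructor
  · rintro ⟨t, ht, rfl⟩
    exact ⟨t • d₁ + (1 - t) • d₂, ⟨t, ht, rfl⟩, shf_comb c t d₁ d₂⟩
  · rintro ⟨e', ⟨t, ht, rfl⟩, rfl⟩
    exact ⟨t, ht, shf_comb c t d₁ d₂⟩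

lemma sltR_shf (c : ℝ) (d' d : ℝ × ℝ) : sltR (shf c d') (shf c d) ↔ sltR d' d := by
  unfold sltR sqleR shf
  simp [Prod.ext_iff]

lemma SCPF_shf (c : ℝ) (I : Set (ℝ × ℝ)) : SCPF (shf c '' I) = shf c '' SCPF I := by
  ext d
  constructor
  · rintro ⟨⟨e, heI, rfl⟩, hdom⟩
    refine ⟨e, ⟨heI, ?_⟩, rfl⟩
    intro d₁ h₁ d₂ h₂ d' hd' hlt
    exact hdom (shf c d₁) ⟨d₁, h₁, rfl⟩ (shf c d₂) ⟨d₂, h₂, rfl⟩ (shf c d')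
      (by rw [seg_shf]; exact ⟨d', hd', rfl⟩) ((sltR_shf c d' e).2 hlt)
  · rintro ⟨e, ⟨heI, hedom⟩, rfl⟩
    refine ⟨⟨e, heI, rfl⟩, ?_⟩
    rintro d₁ ⟨e₁, he₁, rfl⟩ d₂ ⟨e₂, he₂, rfl⟩ d' hd' hlt
    rw [seg_shf] at hd'
    obtain ⟨e', he', rfl⟩ := hd'
    exact hedom e₁ he₁ e₂ he₂ e' he' ((sltR_shf c e' e).1 hlt)

lemma PsiAR_shf (I₁ I₂ : Set (ℝ × ℝ)) (c : ℝ) : I₁ ∪ shf c '' I₂ = PsiAR I₁ I₂ c := by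
  unfold PsiAR shf
  congr 1
  ext d
  constructor
  · rintro ⟨e, he, rfl⟩; exact ⟨e, he, rfl⟩
  · rintro ⟨e, he, rfl⟩; exact ⟨e, he, rfl⟩

end PECaux
end

/-- The recursion `PEC(Λ̂) = SCPF(Ψ_A(PEC(Λ̂^{a/0}), PEC(Λ̂^{a/1}), γ_a))`, where
`PEC(Λ̂) = SCPF(τ_e(Σ_Λ))`. -/
theorem PEC_recursion_a [Fintype F] [Fintype A] [DecidableEq F] [DecidableEq A]
    (Λ : Scenario F A) (π : F → ℝ) (hπ : ∀ g, π g ∈ Set.Icc (0 : ℝ) 1)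
    (γ : A → ℝ) (hγ : ∀ a, 0 ≤ γ a)
    (a : A) (hQa : Λ.Q a = ∅) :
    SCPF (Set.range (fun σ : Strategy Λ => (probR Λ π σ, expCostR Λ π γ σ))) =
      SCPF (PsiAR
        (SCPF (Set.range (fun σ0 : Strategy (Λ.reduceA a false) =>
          (probR (Λ.reduceA a false) π σ0,
            expCostR (Λ.reduceA a false) π (fun a' => γ a'.1) σ0))))
        (SCPF (Set.range (fun σ1 : Strategy (Λ.reduceA a true) =>
          (probR (Λ.reduceA a true) π σ1,
            expCostR (Λ.reduceA a true) π (fun a' => γ a'.1) σ1))))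
        (γ a)) := by
  classical
  rw [PECaux.range_eq Λ π γ a hQa,
      PECaux.SCPF_union _ _ (Set.finite_range _) ((Set.finite_range _).image _),
      PECaux.SCPF_shf, PECaux.PsiAR_shf]
end
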